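/- Let E and F be Banach lattices whose Fremlin tensor product E ⊗̄ F is Dedekind complete, and let (B_α)_{α∈I}, (C_β)_{β∈J} be dense band decompositions of E and F respectively. Then the family (B_α ⊗̂ C_β)_{(α,β)∈I×J} is a dense band decomposition of E ⊗̂ F: its members are pairwise disjoint projection bands whose linear span is norm dense in E ⊗̂ F. -/

import Mathlib

open Filter Topology

/-- The sublattice-submodule of `G` generated by a set `s`. -/
def latticeSpan {G : Type*} [Lattice G] [AddCommGroup G] [Module ℝ G] (s : Set G) : Set G :=
  {x | ∀ p : Submodule ℝ G, s ⊆ p → (∀ a ∈ (p : Set G), ∀ b ∈ (p : Set G), a ⊔ b ∈ p) → x ∈ p}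

/-- `t` realizes the Banach lattice `G` as the Fremlin projective tensor
product `E ⊗̂ F`: a bilinear lattice bimorphism whose norm is the (cross)
Fremlin projective norm and whose image spans a dense subspace, satisfying
Fremlin's lattice estimate. -/
structure IsFremlinProjTensor (E F G : Type*)
    [NormedAddCommGroup E] [Lattice E] [HasSolidNorm E] [IsOrderedAddMonoid E] [NormedSpace ℝ E]
    [NormedAddCommGroup F] [Lattice F] [HasSolidNorm F] [IsOrderedAddMonoid F] [NormedSpace ℝ F]
    [NormedAddCommGroup G] [Lattice G] [HasSolidNorm G] [IsOrderedAddMonoid G] [NormedSpace ℝ G] [CompleteSpace G]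
    (t : E →ₗ[ℝ] F →ₗ[ℝ] G) : Prop where
  abs_tensor : ∀ x y, |t x y| = t |x| |y|
  pos_pos : ∀ x y, 0 < x → 0 < y → 0 < t x y
  inf_tensor_le : ∀ x₀ x₁ y₀ y₁, 0 ≤ x₀ → 0 ≤ x₁ → 0 ≤ y₀ → 0 ≤ y₁ →
    (t x₀ y₀ ⊓ t x₁ y₁) ≤ t (x₀ ⊓ x₁) (y₀ ⊔ y₁)
  cross_norm : ∀ x y, ‖t x y‖ = ‖x‖ * ‖y‖
  dense_span : Dense (Submodule.span ℝ (Set.image2 (fun x y => t x y) Set.univ Set.univ) : Set G)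

/-- `u` is a quasi-interior point of the Banach lattice `G`: `u ≥ 0` and for
every `x ≥ 0`, `x ⊓ n•u → x` in norm (equivalently, the ideal generated by `u`
is norm dense). -/
def QuasiInteriorPoint {G : Type*} [NormedAddCommGroup G] [Lattice G] [HasSolidNorm G] [IsOrderedAddMonoid G] (u : G) : Prop :=
  0 ≤ u ∧ ∀ x : G, 0 ≤ x → Tendsto (fun n : ℕ => x ⊓ n • u) atTop (nhds x)

/-- `P` is a band projection on the vector lattice `G`. -/
structure IsBandProjection {G : Type*} [Lattice G] [AddCommGroup G] [Module ℝ G]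
    (P : G →ₗ[ℝ] G) : Prop where
  idem : ∀ x, P (P x) = P x
  pos : ∀ x, 0 ≤ x → 0 ≤ P x
  proj_le : ∀ x, 0 ≤ x → P x ≤ x
  disj : ∀ x, |P x| ⊓ |x - P x| = 0

/-- A family of subsets of a Banach lattice is a dense band decomposition if
its members are pairwise disjoint projection bands whose linear span is norm
dense. -/
def IsDenseBandDecomposition {G : Type*} [NormedAddCommGroup G] [Lattice G] [HasSolidNorm G] [IsOrderedAddMonoid G]
    [NormedSpace ℝ G] {ι : Type*} (D : ι → Set G) : Prop :=
  (∀ i, ∃ P : G →ₗ[ℝ] G, IsBandProjection P ∧ Set.range P = D i) ∧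
    (∀ i j, i ≠ j → ∀ a ∈ D i, ∀ b ∈ D j, |a| ⊓ |b| = 0) ∧
    Dense (Submodule.span ℝ (⋃ i, D i) : Set G)

/-!
Since `|t x y| = t |x| |y|`, the maps `t x ·` and `t · y` (for `x, y ≥ 0`) preserve `|·|`, hence `⊓`,
so `t` carries disjointness in either factor to disjointness in `G`. For band projections `P`, `Q`
of `E`, `F` this makes `ψ = t ∘ (P ⊗ Q)` on the algebraic tensor product disjoint from `t - ψ`.
Hence `|ψ w| ≤ |t w|`, so `ψ` extends to a bounded operator `R` on `E ⊗̂ F`, a band projection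
because the defining identities pass to limits. Its range is the closure of the sublattice
generated by `P(E) ⊗ Q(F)`: it lies in that closure by density, and conversely that closure
consists of elements disjoint from the kernel of `R`, which `R` fixes. Here, as for the
disjointness of distinct `B_α ⊗̂ C_β`, one uses that the elements disjoint from a given set form a
closed solid subgroup, which is automatically a subspace closed under `⊔`. Density comes from
the joint continuity of `t`.
-/

open Set TensorProduct LatticeOrderedAddCommGroup

section LatticeOrderedGroup

variable {α : Type*} [AddCommGroup α] [Lattice α] [IsOrderedAddMonoid α]

theorem inf_add_le_inf_add_inf {a b c : α} (ha : 0 ≤ a) (hb : 0 ≤ b) (hc : 0 ≤ c) :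
    a ⊓ (b + c) ≤ a ⊓ b + a ⊓ c :=
  calc a ⊓ (b + c) ≤ (a ⊓ b + a) ⊓ (a ⊓ b + c) := by
        refine le_inf (inf_le_left.trans (le_add_of_nonneg_left (le_inf ha hb))) ?_
        rw [inf_add]
        exact inf_le_inf_right _ (le_add_of_nonneg_right hc)
    _ = a ⊓ b + a ⊓ c := (add_inf _ _ _).symm

theorem abs_two_nsmul (a : α) : |2 • a| = 2 • |a| := by
  have h := two_nsmul_sup_eq_add_add_abs_sub a (-a)
  rwa [add_neg_cancel, zero_add, show -a - a = -(2 • a) by rw [two_nsmul]; abel, abs_neg,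
    eq_comm] at h

theorem abs_sup_le_abs_add_abs (a b : α) : |a ⊔ b| ≤ |a| + |b| := by
  refine abs_le'.2 ⟨sup_le ?_ ?_, ?_⟩
  · exact (le_abs_self a).trans (le_add_of_nonneg_right (abs_nonneg b))
  · exact (le_abs_self b).trans (le_add_of_nonneg_left (abs_nonneg a))
  · rw [neg_sup]
    exact inf_le_left.trans ((neg_le_abs a).trans (le_add_of_nonneg_right (abs_nonneg b)))

theorem nonneg_of_abs_inf_abs_eq_zero {u v : α} (h : |u| ⊓ |v| = 0) (huv : 0 ≤ u + v) :
    0 ≤ u := by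
  have hv : -u ≤ |v| := (neg_le_iff_add_nonneg'.2 huv).trans (le_abs_self v)
  have hneg : u⁻ ≤ |u| ⊓ |v| :=
    le_inf (sup_le (neg_le_abs u) (abs_nonneg u)) (sup_le hv (abs_nonneg v))
  exact negPart_eq_zero.1 (le_antisymm (hneg.trans h.le) (negPart_nonneg u))

theorem abs_le_abs_add_of_abs_inf_abs_eq_zero {u v : α} (h : |u| ⊓ |v| = 0) :
    |u| ≤ |u + v| := by
  have hle : |u| - |u + v| ≤ |v| :=
    sub_le_iff_le_add'.2 (by simpa using abs_add_le (u + v) (-v))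
  exact sub_nonpos.1 ((le_inf (sub_le_self _ (abs_nonneg _)) hle).trans h.le)

theorem eq_zero_of_abs_inf_abs_self {u : α} (h : |u| ⊓ |u| = 0) : u = 0 := by
  rw [inf_idem] at h
  exact le_antisymm (h ▸ le_abs_self u) (neg_nonpos.1 (h ▸ neg_le_abs u))

def disjointComplement (A : Set α) : AddSubgroup α where
  carrier := {w | ∀ a ∈ A, |w| ⊓ |a| = 0}
  zero_mem' a _ := by rw [abs_zero]; exact inf_eq_left.2 (abs_nonneg a)
  add_mem' {u v} hu hv a ha := by
    refine le_antisymm ?_ (le_inf (abs_nonneg _) (abs_nonneg _))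
    calc |u + v| ⊓ |a| ≤ |a| ⊓ (|u| + |v|) := by
          rw [inf_comm]; exact inf_le_inf_left _ (abs_add_le u v)
      _ ≤ |a| ⊓ |u| + |a| ⊓ |v| :=
          inf_add_le_inf_add_inf (abs_nonneg a) (abs_nonneg u) (abs_nonneg v)
      _ = 0 := by rw [inf_comm, hu a ha, inf_comm, hv a ha, add_zero]
  neg_mem' {u} hu a ha := by rw [abs_neg]; exact hu a ha

theorem subset_disjointComplement_comm {s A : Set α} :
    s ⊆ disjointComplement A ↔ A ⊆ disjointComplement s :=
  ⟨fun h a ha w hw => inf_comm |a| |w| ▸ h hw a ha, fun h w hw a ha => inf_comm |a| |w| ▸ h ha w hw⟩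

theorem isSolid_disjointComplement (A : Set α) : IsSolid (disjointComplement A : Set α) :=
  fun _ hx _ hyx a ha => le_antisymm ((inf_le_inf_right _ hyx).trans (hx a ha).le)
    (le_inf (abs_nonneg _) (abs_nonneg _))

theorem AddSubgroup.sup_mem_of_isSolid {D : AddSubgroup α} (hD : IsSolid (D : Set α)) {a b : α}
    (ha : a ∈ D) (hb : b ∈ D) : a ⊔ b ∈ D := by
  refine hD (D.add_mem (hD ha (abs_abs a).le) (hD hb (abs_abs b).le)) ?_
  rw [abs_of_nonneg (add_nonneg (abs_nonneg a) (abs_nonneg b))]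
  exact abs_sup_le_abs_add_abs a b

theorem LinearMap.map_inf_of_map_abs {𝕜 M N : Type*} [DivisionRing 𝕜] [NeZero (2 : 𝕜)]
    [AddCommGroup M] [Lattice M] [IsOrderedAddMonoid M] [Module 𝕜 M]
    [AddCommGroup N] [Lattice N] [IsOrderedAddMonoid N] [Module 𝕜 N]
    (f : M →ₗ[𝕜] N) (hf : ∀ x, |f x| = f |x|) (a b : M) : f (a ⊓ b) = f a ⊓ f b := by
  rw [inf_eq_half_smul_add_sub_abs_sub' 𝕜, inf_eq_half_smul_add_sub_abs_sub' 𝕜 (f a)]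
  simp only [map_smul, map_add, ← hf, map_sub]

end LatticeOrderedGroup

section LatticeSpan

variable {G : Type*} [Lattice G] [AddCommGroup G] [Module ℝ G]

theorem subset_latticeSpan (s : Set G) : s ⊆ latticeSpan s := fun _ hx _ hp _ => hp hx

theorem span_subset_latticeSpan (s : Set G) : (Submodule.span ℝ s : Set G) ⊆ latticeSpan s :=
  fun _ hx _ hp _ => Submodule.span_le.2 hp hx

end LatticeSpan

section TopologicalLattice

variable {G : Type*} [AddCommGroup G] [Lattice G] [IsOrderedAddMonoid G] [Module ℝ G]
  [TopologicalSpace G] [ContinuousSMul ℝ G]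

theorem AddSubgroup.smul_mem_of_isClosed_of_isSolid {D : AddSubgroup G}
    (hc : IsClosed (D : Set G)) (hs : IsSolid (D : Set G)) (r : ℝ) {w : G} (hw : w ∈ D) :
    r • w ∈ D := by
  -- `S = {s | s • w ∈ D}` is a closed subgroup of `ℝ` containing every `2⁻ⁿ`, hence all of `ℝ`
  let S : AddSubgroup ℝ := D.comap (LinearMap.toSpanSingleton ℝ G w).toAddMonoidHom
  have hS : ∀ s, s ∈ S ↔ s • w ∈ D := fun _ => Iff.rfl
  have hhalf : ∀ s ∈ S, s / 2 ∈ S := fun s h => (hS _).2 <| hs ((hS s).1 h) <|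
    calc |(s / 2) • w| ≤ 2 • |(s / 2) • w| := by
          rw [two_nsmul]; exact le_add_of_nonneg_left (abs_nonneg _)
      _ = |s • w| := by rw [← abs_two_nsmul, two_nsmul, ← add_smul, add_halves]
  have hpow : ∀ n : ℕ, (2 ^ n)⁻¹ ∈ S := by
    intro n
    induction n with
    | zero => simpa [hS] using hw
    | succ n ih =>
      have h := hhalf _ ih
      rwa [div_eq_mul_inv, ← mul_inv, ← pow_succ] at h
  have hdense : Dense (S : Set ℝ) := S.dense_of_not_isolated_zero fun ε hε => by
    obtain ⟨n, hn⟩ := exists_pow_lt_of_lt_one hε (by norm_num : (2 : ℝ)⁻¹ < 1)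
    exact ⟨(2 ^ n)⁻¹, hpow n, by positivity, by rwa [← inv_pow]⟩
  have hclosed : IsClosed (S : Set ℝ) := hc.preimage (continuous_id.smul continuous_const)
  have hr : r ∈ (S : Set ℝ) := by rw [← hclosed.closure_eq, hdense.closure_eq]; trivial
  exact (hS r).1 hr

theorem closure_latticeSpan_subset {D : AddSubgroup G} (hc : IsClosed (D : Set G))
    (hs : IsSolid (D : Set G)) {s : Set G} (h : s ⊆ D) : closure (latticeSpan s) ⊆ D := by
  let p : Submodule ℝ G :=
    { D with smul_mem' := fun r _ hw => D.smul_mem_of_isClosed_of_isSolid hc hs r hw }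
  exact hc.closure_subset_iff.2 fun x hx => hx p h fun a ha b hb => D.sup_mem_of_isSolid hs ha hb

end TopologicalLattice

section NormedLattice

variable {G : Type*} [NormedAddCommGroup G] [Lattice G] [HasSolidNorm G] [IsOrderedAddMonoid G]

theorem HasSolidNorm.continuous_abs : Continuous fun x : G => |x| :=
  continuous_id.sup continuous_neg

theorem isClosed_disjointComplement (A : Set G) : IsClosed (disjointComplement A : Set G) := by
  simp only [disjointComplement, AddSubgroup.coe_set_mk, AddSubmonoid.coe_set_mk,
    AddSubsemigroup.coe_set_mk, ofPred_forall]
  exact isClosed_biInter fun a _ =>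
    isClosed_eq (HasSolidNorm.continuous_abs.inf continuous_const) continuous_const

variable [NormedSpace ℝ G]

theorem closure_latticeSpan_subset_disjointComplement {s A : Set G}
    (h : s ⊆ disjointComplement A) : closure (latticeSpan s) ⊆ disjointComplement A :=
  closure_latticeSpan_subset (isClosed_disjointComplement A) (isSolid_disjointComplement A) h

theorem abs_inf_abs_closure_latticeSpan_eq_zero {s s' : Set G}
    (h : ∀ a ∈ s, ∀ b ∈ s', |a| ⊓ |b| = 0) :
    ∀ a ∈ closure (latticeSpan s), ∀ b ∈ closure (latticeSpan s'), |a| ⊓ |b| = 0 := by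
  have h₁ := closure_latticeSpan_subset_disjointComplement (A := s') h
  exact closure_latticeSpan_subset_disjointComplement (subset_disjointComplement_comm.1 h₁)
    |> subset_disjointComplement_comm.1

end NormedLattice

namespace IsBandProjection

variable {H : Type*} [AddCommGroup H] [Lattice H] [Module ℝ H] {P : H →ₗ[ℝ] H}

theorem of_abs_inf_abs_sub_eq_zero [IsOrderedAddMonoid H] (hidem : ∀ x, P (P x) = P x)
    (hdisj : ∀ x, |P x| ⊓ |x - P x| = 0) : IsBandProjection P where
  idem := hidem
  pos x hx := nonneg_of_abs_inf_abs_eq_zero (hdisj x) (by rwa [add_sub_cancel])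
  proj_le x hx := sub_nonneg.1 <|
    nonneg_of_abs_inf_abs_eq_zero (inf_comm |P x| _ ▸ hdisj x) (by rwa [sub_add_cancel])
  disj := hdisj

theorem abs_inf_abs_sub_eq_zero (hP : IsBandProjection P) (w x : H) :
    |P w| ⊓ |x - P x| = 0 := by
  -- `P` and `1 - P` send `P w + (x - P x)` to `P w` and `x - P x`
  simpa [hP.idem] using hP.disj (P w + (x - P x))

theorem apply_eq_of_mem_disjointComplement [IsOrderedAddMonoid H] (hP : IsBandProjection P) {g : H}
    (hg : g ∈ disjointComplement (range fun x => x - P x)) : P g = g := by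
  have hPg : P g ∈ disjointComplement (range fun x => x - P x) := by
    rintro _ ⟨x, rfl⟩
    exact hP.abs_inf_abs_sub_eq_zero g x
  have h := (disjointComplement _).sub_mem hg hPg (g - P g) ⟨g, rfl⟩
  exact (sub_eq_zero.1 (eq_zero_of_abs_inf_abs_self h)).symm

end IsBandProjection

theorem TensorProduct.apply_mem_of_forall_tmul {R M N P : Type*} [CommSemiring R]
    [AddCommMonoid M] [Module R M] [AddCommMonoid N] [Module R N] [AddCommGroup P] [Module R P]
    (f : M ⊗[R] N →ₗ[R] P) {D : AddSubgroup P} (h : ∀ x y, f (x ⊗ₜ y) ∈ D) (w : M ⊗[R] N) :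
    f w ∈ D := by
  induction w using TensorProduct.induction_on with
  | zero => simpa only [map_zero] using D.zero_mem
  | add w₁ w₂ h₁ h₂ => simpa only [map_add] using D.add_mem h₁ h₂
  | tmul x y => exact h x y

theorem TensorProduct.lift_map_mem_span_image2 {R M N P : Type*} [CommRing R]
    [AddCommGroup M] [Module R M] [AddCommGroup N] [Module R N] [AddCommGroup P] [Module R P]
    (t : M →ₗ[R] N →ₗ[R] P) (f : M →ₗ[R] M) (g : N →ₗ[R] N) (w : M ⊗[R] N) :
    lift t (map f g w) ∈ Submodule.span R (image2 (fun x y => t x y) (range f) (range g)) :=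
  apply_mem_of_forall_tmul (lift t ∘ₗ map f g)
    (D := (Submodule.span R (image2 (fun x y => t x y) (range f) (range g))).toAddSubgroup)
    (fun x y => Submodule.subset_span ⟨f x, ⟨x, rfl⟩, g y, ⟨y, rfl⟩, rfl⟩) w

section LatticeBimorphism

variable {E F G : Type*}
  [AddCommGroup E] [Lattice E] [IsOrderedAddMonoid E] [Module ℝ E]
  [AddCommGroup F] [Lattice F] [IsOrderedAddMonoid F] [Module ℝ F]
  [AddCommGroup G] [Lattice G] [IsOrderedAddMonoid G] [Module ℝ G]
  {t : E →ₗ[ℝ] F →ₗ[ℝ] G}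

theorem apply_le_apply_of_map_abs (habs : ∀ x y, |t x y| = t |x| |y|) {x : E} {y y' : F}
    (hx : 0 ≤ x) (hy : y ≤ y') : t x y ≤ t x y' := by
  have h : 0 ≤ t x (y' - y) := by
    rw [← abs_of_nonneg hx, ← abs_of_nonneg (sub_nonneg.2 hy), ← habs]
    exact abs_nonneg _
  rwa [map_sub, sub_nonneg] at h

theorem abs_inf_abs_apply_eq_zero_of_left (habs : ∀ x y, |t x y| = t |x| |y|) {a a' : E}
    (hd : |a| ⊓ |a'| = 0) (b b' : F) : |t a b| ⊓ |t a' b'| = 0 := by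
  set V := |b| ⊔ |b'|
  have hV : 0 ≤ V := (abs_nonneg b).trans le_sup_left
  have htV : ∀ x, |t.flip V x| = t.flip V |x| := fun x => by
    simp only [LinearMap.flip_apply, habs, abs_of_nonneg hV]
  refine le_antisymm ?_ (le_inf (abs_nonneg _) (abs_nonneg _))
  calc |t a b| ⊓ |t a' b'| = t |a| |b| ⊓ t |a'| |b'| := by rw [habs, habs]
    _ ≤ t |a| V ⊓ t |a'| V := inf_le_inf (apply_le_apply_of_map_abs habs (abs_nonneg a) le_sup_left)
        (apply_le_apply_of_map_abs habs (abs_nonneg a') le_sup_right)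
    _ = t.flip V (|a| ⊓ |a'|) := (t.flip V).map_inf_of_map_abs htV _ _ |>.symm
    _ = 0 := by rw [hd, map_zero]

theorem abs_inf_abs_apply_eq_zero_of_right (habs : ∀ x y, |t x y| = t |x| |y|) (a a' : E)
    {b b' : F} (hd : |b| ⊓ |b'| = 0) : |t a b| ⊓ |t a' b'| = 0 :=
  abs_inf_abs_apply_eq_zero_of_left (t := t.flip) (fun y x => habs x y) hd a a'

theorem abs_inf_abs_lift_sub_eq_zero (habs : ∀ x y, |t x y| = t |x| |y|) {P : E →ₗ[ℝ] E}
    {Q : F →ₗ[ℝ] F} (hP : IsBandProjection P) (hQ : IsBandProjection Q) (w w' : E ⊗[ℝ] F) :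
    |lift t (map P Q w)| ⊓ |lift t w' - lift t (map P Q w')| = 0 := by
  set K := disjointComplement (range fun w' => lift t w' - lift t (map P Q w'))
  suffices ∀ w, lift t (map P Q w) ∈ K from this w _ ⟨w', rfl⟩
  refine apply_mem_of_forall_tmul (lift t ∘ₗ map P Q) fun x y => ?_
  have hK : range (fun w' => lift t w' - lift t (map P Q w')) ⊆
      disjointComplement {t (P x) (Q y)} := by
    rintro _ ⟨w', rfl⟩
    refine apply_mem_of_forall_tmul (lift t - lift t ∘ₗ map P Q) (fun x' y' => ?_) w'
    have hsplit : t x' y' - t (P x') (Q y') = t (x' - P x') y' + t (P x') (y' - Q y') := by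
      simp only [map_sub, LinearMap.sub_apply]; abel
    simp only [LinearMap.sub_apply, LinearMap.comp_apply, lift.tmul, map_tmul, hsplit]
    refine add_mem ?_ ?_ <;> rintro _ rfl
    · exact abs_inf_abs_apply_eq_zero_of_left habs
        (inf_comm |P x| _ ▸ hP.abs_inf_abs_sub_eq_zero x x') _ _
    · exact abs_inf_abs_apply_eq_zero_of_right habs _ _
        (inf_comm |Q y| _ ▸ hQ.abs_inf_abs_sub_eq_zero y y')
  simpa only [LinearMap.comp_apply, map_tmul, lift.tmul, SetLike.mem_coe] using
    subset_disjointComplement_comm.1 hK rfl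

end LatticeBimorphism

namespace IsBandProjection

variable {G : Type*} [NormedAddCommGroup G] [Lattice G] [HasSolidNorm G] [IsOrderedAddMonoid G]
  [NormedSpace ℝ G]

theorem of_denseRange {α : Type*} {φ : α → G} (hφ : DenseRange φ) {R : G →L[ℝ] G}
    (hidem : ∀ a, R (R (φ a)) = R (φ a)) (hdisj : ∀ a, |R (φ a)| ⊓ |φ a - R (φ a)| = 0) :
    IsBandProjection (R : G →ₗ[ℝ] G) := by
  refine .of_abs_inf_abs_sub_eq_zero (fun g => ?_) (fun g => ?_)
  · exact hφ.induction_on g (isClosed_eq (R.continuous.comp R.continuous) R.continuous) hidem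
  · refine hφ.induction_on g (isClosed_eq ?_ continuous_const) hdisj
    exact (HasSolidNorm.continuous_abs.comp R.continuous).inf
      (HasSolidNorm.continuous_abs.comp (continuous_id.sub R.continuous))

theorem closure_latticeSpan_subset_range {R : G →ₗ[ℝ] G} (hR : IsBandProjection R) {s : Set G}
    (hs : s ⊆ range R) : closure (latticeSpan s) ⊆ range R := by
  have h : s ⊆ disjointComplement (range fun g => g - R g) := by
    intro a ha
    obtain ⟨w, rfl⟩ := hs ha
    rintro _ ⟨g, rfl⟩
    exact hR.abs_inf_abs_sub_eq_zero w g
  exact fun g hg => ⟨g, hR.apply_eq_of_mem_disjointComplement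
    (closure_latticeSpan_subset_disjointComplement h hg)⟩

end IsBandProjection

namespace IsFremlinProjTensor

variable {E F G : Type*}
  [NormedAddCommGroup E] [Lattice E] [HasSolidNorm E] [IsOrderedAddMonoid E] [NormedSpace ℝ E]
  [NormedAddCommGroup F] [Lattice F] [HasSolidNorm F] [IsOrderedAddMonoid F] [NormedSpace ℝ F]
  [NormedAddCommGroup G] [Lattice G] [HasSolidNorm G] [IsOrderedAddMonoid G] [NormedSpace ℝ G]
  [CompleteSpace G] {t : E →ₗ[ℝ] F →ₗ[ℝ] G}

theorem continuous (ht : IsFremlinProjTensor E F G t) : Continuous fun p : E × F => t p.1 p.2 :=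
  (t.mkContinuous₂ 1 fun x y => by rw [ht.cross_norm, one_mul]).continuous₂

theorem denseRange_lift (ht : IsFremlinProjTensor E F G t) : DenseRange (lift t) := by
  have h : Submodule.span ℝ (image2 (fun x y => t x y) univ univ) ≤ LinearMap.range (lift t) :=
    Submodule.span_le.2 fun _ ⟨x, _, y, _, hxy⟩ => ⟨x ⊗ₜ y, hxy ▸ lift.tmul x y⟩
  exact ht.dense_span.mono fun g hg => LinearMap.mem_range.1 (h hg)

theorem exists_isBandProjection (ht : IsFremlinProjTensor E F G t) {P : E →ₗ[ℝ] E}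
    {Q : F →ₗ[ℝ] F} (hP : IsBandProjection P) (hQ : IsBandProjection Q) :
    ∃ R : G →ₗ[ℝ] G, IsBandProjection R ∧
      range R = closure (latticeSpan (image2 (fun x y => t x y) (range P) (range Q))) := by
  set φ := lift t
  set ψ := φ ∘ₗ map P Q
  have hdisj : ∀ w w', |ψ w| ⊓ |φ w' - ψ w'| = 0 :=
    abs_inf_abs_lift_sub_eq_zero ht.abs_tensor hP hQ
  have hdense : DenseRange φ := ht.denseRange_lift
  have hbound : ∃ C, ∀ w, ‖ψ w‖ ≤ C * ‖φ w‖ := ⟨1, fun w => by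
    rw [one_mul]
    refine norm_le_norm_of_abs_le_abs ?_
    simpa using abs_le_abs_add_of_abs_inf_abs_eq_zero (hdisj w w)⟩
  set R := ψ.extendOfNorm φ
  have hRφ : ∀ w, R (φ w) = ψ w := LinearMap.extendOfNorm_eq hdense hbound
  have hPQ : map P Q ∘ₗ map P Q = map P Q := by
    rw [← map_comp, LinearMap.ext (f := P ∘ₗ P) hP.idem, LinearMap.ext (f := Q ∘ₗ Q) hQ.idem]
  have hR : IsBandProjection (R : G →ₗ[ℝ] G) := by
    refine .of_denseRange hdense (fun w => ?_) (fun w => by simpa only [hRφ] using hdisj w w)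
    rw [hRφ, show ψ w = φ (map P Q w) from rfl, hRφ]
    exact congrArg φ (LinearMap.congr_fun hPQ w)
  refine ⟨R, hR, subset_antisymm ?_ (hR.closure_latticeSpan_subset_range ?_)⟩
  · rintro _ ⟨g, rfl⟩
    refine hdense.induction_on g (isClosed_closure.preimage R.continuous) fun w => ?_
    show R (φ w) ∈ _
    rw [hRφ]
    exact subset_closure (span_subset_latticeSpan _ (lift_map_mem_span_image2 t P Q w))
  · rintro _ ⟨_, ⟨x, rfl⟩, _, ⟨y, rfl⟩, rfl⟩
    exact ⟨t x y, by simpa [φ, ψ] using hRφ (x ⊗ₜ y)⟩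

theorem dense_span_iUnion_image2 (ht : IsFremlinProjTensor E F G t) {I J : Type*}
    {B : I → Set E} {C : J → Set F} (hB : Dense (Submodule.span ℝ (⋃ i, B i) : Set E))
    (hC : Dense (Submodule.span ℝ (⋃ j, C j) : Set F)) :
    Dense (Submodule.span ℝ (⋃ p : I × J, image2 (fun x y => t x y) (B p.1) (C p.2)) : Set G) := by
  set M := Submodule.span ℝ (⋃ p : I × J, image2 (fun x y => t x y) (B p.1) (C p.2))
  have hspan : ∀ x ∈ Submodule.span ℝ (⋃ i, B i), ∀ y ∈ Submodule.span ℝ (⋃ j, C j), t x y ∈ M := by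
    intro x hx y hy
    have h := Submodule.apply_mem_map₂ t hx hy
    rw [Submodule.map₂_span_span, image2_iUnion_left] at h
    refine Submodule.span_mono (iUnion_subset fun i => ?_) h
    rw [image2_iUnion_right]
    exact iUnion_subset fun j => subset_iUnion_of_subset (i, j) subset_rfl
  have hclosure : ∀ x y, t x y ∈ closure (M : Set G) := by
    have h : closure ((Submodule.span ℝ (⋃ i, B i) : Set E) ×ˢ (Submodule.span ℝ (⋃ j, C j)))
        ⊆ (fun p : E × F => t p.1 p.2) ⁻¹' closure M :=
      closure_minimal (fun p hp => subset_closure (hspan _ hp.1 _ hp.2))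
        (isClosed_closure.preimage ht.continuous)
    rw [(hB.prod hC).closure_eq] at h
    exact fun x y => h (mem_univ (x, y))
  have hle : Submodule.span ℝ (image2 (fun x y => t x y) univ univ) ≤ M.topologicalClosure :=
    Submodule.span_le.2 fun _ ⟨x, _, y, _, hxy⟩ => hxy ▸ hclosure x y
  exact dense_closure.1 (ht.dense_span.mono hle)

end IsFremlinProjTensor

theorem denseBandDecomposition_tensor_general
    {E F G : Type*}
    [NormedAddCommGroup E] [Lattice E] [HasSolidNorm E] [IsOrderedAddMonoid E] [NormedSpace ℝ E]
    [NormedAddCommGroup F] [Lattice F] [HasSolidNorm F] [IsOrderedAddMonoid F] [NormedSpace ℝ F]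
    [NormedAddCommGroup G] [Lattice G] [HasSolidNorm G] [IsOrderedAddMonoid G] [NormedSpace ℝ G] [CompleteSpace G]
    (t : E →ₗ[ℝ] F →ₗ[ℝ] G) (ht : IsFremlinProjTensor E F G t)
    {I J : Type*} (B : I → Set E) (C : J → Set F)
    (hB : IsDenseBandDecomposition B) (hC : IsDenseBandDecomposition C) :
    IsDenseBandDecomposition
      (fun p : I × J => closure (latticeSpan (Set.image2 (fun x y => t x y) (B p.1) (C p.2)))) := by
  obtain ⟨hBproj, hBdisj, hBdense⟩ := hB
  obtain ⟨hCproj, hCdisj, hCdense⟩ := hC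
  refine ⟨fun ⟨α, β⟩ => ?_, fun ⟨α, β⟩ ⟨α', β'⟩ hne => ?_, ?_⟩
  · obtain ⟨P, hP, hPB⟩ := hBproj α
    obtain ⟨Q, hQ, hQC⟩ := hCproj β
    dsimp only
    rw [← hPB, ← hQC]
    exact ht.exists_isBandProjection hP hQ
  · refine abs_inf_abs_closure_latticeSpan_eq_zero ?_
    rintro _ ⟨x, hx, y, hy, rfl⟩ _ ⟨x', hx', y', hy', rfl⟩
    by_cases hα : α = α'
    · subst hα
      have hβ : β ≠ β' := fun h => hne (h ▸ rfl)
      exact abs_inf_abs_apply_eq_zero_of_right ht.abs_tensor x x' (hCdisj β β' hβ y hy y' hy')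
    · exact abs_inf_abs_apply_eq_zero_of_left ht.abs_tensor (hBdisj α α' hα x hx x' hx') y y'
  · refine (ht.dense_span_iUnion_image2 hBdense hCdense).mono (Submodule.span_mono ?_)
    exact iUnion_mono fun p => (subset_latticeSpan _).trans subset_closure

/-- if the Fremlin tensor product `E ⊗̄ F` (the sublattice of
`E ⊗̂ F` generated by the elementary tensors) is Dedekind complete and
`(B_α)`, `(C_β)` are dense band decompositions of `E`, `F`, then
`(B_α ⊗̂ C_β)_{(α,β)}` — the closures of the sublattices generated by the
`B_α ⊗ C_β` — is a dense band decomposition of `E ⊗̂ F`. -/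
theorem denseBandDecomposition_tensor
    {E F G : Type*}
    [NormedAddCommGroup E] [Lattice E] [HasSolidNorm E] [IsOrderedAddMonoid E] [NormedSpace ℝ E] [CompleteSpace E]
    [NormedAddCommGroup F] [Lattice F] [HasSolidNorm F] [IsOrderedAddMonoid F] [NormedSpace ℝ F] [CompleteSpace F]
    [NormedAddCommGroup G] [Lattice G] [HasSolidNorm G] [IsOrderedAddMonoid G] [NormedSpace ℝ G] [CompleteSpace G]
    (t : E →ₗ[ℝ] F →ₗ[ℝ] G) (ht : IsFremlinProjTensor E F G t)
    -- `E ⊗̄ F`, the sublattice generated by the elementary tensors,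
    -- is Dedekind complete:
    (hDed : ∀ s : Set G,
      s ⊆ latticeSpan (Set.image2 (fun x y => t x y) Set.univ Set.univ) →
      s.Nonempty →
      (∃ b ∈ latticeSpan (Set.image2 (fun x y => t x y) Set.univ Set.univ),
        ∀ x ∈ s, x ≤ b) →
      ∃ m ∈ latticeSpan (Set.image2 (fun x y => t x y) Set.univ Set.univ),
        (∀ x ∈ s, x ≤ m) ∧
          ∀ b ∈ latticeSpan (Set.image2 (fun x y => t x y) Set.univ Set.univ),
            (∀ x ∈ s, x ≤ b) → m ≤ b)
    {I J : Type*} (B : I → Set E) (C : J → Set F)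
    (hB : IsDenseBandDecomposition B) (hC : IsDenseBandDecomposition C) :
    IsDenseBandDecomposition
      (fun p : I × J => closure (latticeSpan (Set.image2 (fun x y => t x y) (B p.1) (C p.2)))) :=
  denseBandDecomposition_tensor_general t ht B C hB hC
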